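/- arXiv:1409.4697 — 2 statements merged into one kernel-verified Lean document; each statement's English description precedes it below -/
import Mathlib

section
/- The Casoratian Ω_F^a(x) = det(c_{f_i}^a(x-j+1))_{i,j=1}^k, built from Charlier polynomials with indices in F = {f_1 < ... < f_k}, is a polynomial in x of degree exactly w_F - 1, where w_F = Σ_{f∈F} f - binom(k,2) + 1. -/
open Polynomial

/-- The Charlier polynomial `c_n^a` as a polynomial in `x`. -/
noncomputable def charlierP (a : ℝ) (n : ℕ) : Polynomial ℝ :=
  (n.factorial : ℝ)⁻¹ •
    ∑ j ∈ Finset.range (n + 1),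
      ((-a) ^ (n - j) * (n.choose j : ℝ)) • ∏ i ∈ Finset.range j, (X - C (i : ℝ))

/-- The Casoratian `Ω_F^a(x) = det (c_{f_i}^a(x-j+1))_{i,j=1}^k`:
row `i` corresponds to the `i`-th element of `F` in increasing order, and column `j`
(`j = 0, …, k-1` here) evaluates at `x - j`. -/
noncomputable def casoratianC (a : ℝ) (F : Finset ℕ) : Polynomial ℝ :=
  Matrix.det (Matrix.of (fun i j : Fin F.card =>
    (charlierP a (F.orderIsoOfFin rfl i : ℕ)).comp (X - C (j : ℝ))))

/-!
Gregory–Newton: `p (x - j) = ∑ₜ (j choose t) (Δᵗ p) x` with `Δ p x = p (x - 1) - p x`, so the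
Casoratian matrix of `p₀, …, p_{k-1}` is `(Δᵗ pᵢ)ᵢₜ` times the unitriangular matrix
`(j choose t)ₜⱼ` and has the same determinant. After multiplying column `t` by `x ^ t`, every entry
of row `i` has degree at most `dᵢ = deg pᵢ`, with `x ^ dᵢ`-coefficient
`(-1)ᵗ dᵢ (dᵢ - 1) ⋯ (dᵢ - t + 1) · lc pᵢ`. The coefficient of `x ^ ∑ dᵢ` in
`x ^ (k choose 2) · Ω` is therefore the determinant of these numbers: a nonzero multiple of the
Vandermonde determinant of the distinct `dᵢ`, written in the falling-factorial basis. For the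
Charlier polynomials `dᵢ = fᵢ`.
-/

open Finset

namespace Polynomial

variable {R : Type*} [CommRing R]

theorem coeff_taylor_of_natDegree_le_add_one {p : R[X]} {j : ℕ} (hp : p.natDegree ≤ j + 1)
    (h : R) : (taylor h p).coeff j = p.coeff j + (j + 1) * h * p.coeff (j + 1) := by
  have hlin : (hasseDeriv j p).natDegree ≤ 1 :=
    (natDegree_hasseDeriv_le p j).trans (by omega)
  rw [taylor_coeff, eq_X_add_C_of_natDegree_le_one hlin]
  simp only [eval_add, eval_mul, eval_C, eval_X, hasseDeriv_coeff, zero_add, Nat.choose_self,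
    add_comm 1 j, Nat.choose_succ_self_right]
  push_cast
  ring

noncomputable def fwdDifference (h : R) (p : R[X]) : R[X] := taylor h p - p

variable {h : R} {p : R[X]} {n : ℕ}

theorem coeff_fwdDifference_of_natDegree_le_add_one {j : ℕ} (hp : p.natDegree ≤ j + 1) :
    (fwdDifference h p).coeff j = (j + 1) * h * p.coeff (j + 1) := by
  rw [fwdDifference, coeff_sub, coeff_taylor_of_natDegree_le_add_one hp]
  ring

theorem natDegree_fwdDifference_le (hp : p.natDegree ≤ n) :
    (fwdDifference h p).natDegree ≤ n - 1 := by
  refine natDegree_le_iff_coeff_eq_zero.mpr fun j hj => ?_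
  rw [coeff_fwdDifference_of_natDegree_le_add_one (by omega),
    coeff_eq_zero_of_natDegree_lt (by omega : p.natDegree < j + 1), mul_zero]

theorem coeff_fwdDifference_sub_one (hp : p.natDegree ≤ n) :
    (fwdDifference h p).coeff (n - 1) = n * h * p.coeff n := by
  rcases n with _ | n
  · rw [coeff_fwdDifference_of_natDegree_le_add_one (by omega),
      coeff_eq_zero_of_natDegree_lt (by omega)]
    simp
  · rw [Nat.add_sub_cancel, coeff_fwdDifference_of_natDegree_le_add_one hp]
    push_cast
    ring

theorem natDegree_fwdDifference_iter_le (hp : p.natDegree ≤ n) (t : ℕ) :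
    ((fwdDifference h)^[t] p).natDegree ≤ n - t := by
  induction t with
  | zero => simpa using hp
  | succ t ih =>
    rw [Function.iterate_succ_apply', ← Nat.sub_sub]
    exact natDegree_fwdDifference_le ih

theorem coeff_fwdDifference_iter (hp : p.natDegree ≤ n) (t : ℕ) :
    ((fwdDifference h)^[t] p).coeff (n - t) = n.descFactorial t * h ^ t * p.coeff n := by
  induction t with
  | zero => simp
  | succ t ih =>
    rw [Function.iterate_succ_apply', ← Nat.sub_sub,
      coeff_fwdDifference_sub_one (natDegree_fwdDifference_iter_le hp t), ih,
      Nat.descFactorial_succ, Nat.cast_mul, pow_succ]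
    ring

theorem fwdDifference_iter_eq_zero {t : ℕ} (hp : p.natDegree < t) :
    (fwdDifference h)^[t] p = 0 := by
  have hconst := eq_C_of_natDegree_le_zero
    ((natDegree_fwdDifference_iter_le (h := h) (p := p) le_rfl t).trans (by omega))
  rw [hconst, ← Nat.sub_eq_zero_of_le hp.le, coeff_fwdDifference_iter le_rfl,
    Nat.descFactorial_eq_zero_iff_lt.mpr hp]
  simp

theorem natDegree_fwdDifference_iter_mul_X_pow_le (hp : p.natDegree ≤ n) (t : ℕ) :
    ((fwdDifference h)^[t] p * X ^ t).natDegree ≤ n := by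
  rcases le_or_gt t n with ht | ht
  · exact (natDegree_mul_le_of_le (natDegree_fwdDifference_iter_le hp t)
      (natDegree_X_pow_le t)).trans (by omega)
  · simp [fwdDifference_iter_eq_zero (hp.trans_lt ht)]

theorem coeff_fwdDifference_iter_mul_X_pow (hp : p.natDegree ≤ n) (t : ℕ) :
    ((fwdDifference h)^[t] p * X ^ t).coeff n = n.descFactorial t * h ^ t * p.coeff n := by
  rw [coeff_mul_X_pow']
  split_ifs with ht
  · exact coeff_fwdDifference_iter hp t
  · simp [Nat.descFactorial_eq_zero_iff_lt.mpr (not_le.mp ht)]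

theorem taylor_nsmul_eq_sum_fwdDifference_iter (h : R) (p : R[X]) (j : ℕ) :
    taylor (j • h) p = ∑ t ∈ range (j + 1), j.choose t • (fwdDifference h)^[t] p := by
  let shifts : R[X] → ℕ → R[X] := fun q i => taylor (i • h) q
  have hsemiconj : Function.Semiconj shifts (fwdDifference h) (fwdDiff 1) := fun q => by
    funext i
    simp only [shifts, fwdDifference, fwdDiff, map_sub, taylor_taylor, succ_nsmul]
  have hiter (t : ℕ) : (fwdDiff 1)^[t] (shifts p) = shifts ((fwdDifference h)^[t] p) :=
    ((hsemiconj.iterate_right t) p).symm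
  have newton := shift_eq_sum_fwdDiff_iter 1 (shifts p) j 0
  simp only [hiter] at newton
  simpa [shifts] using newton

theorem coeff_prod_sum_of_natDegree_le {ι : Type*} (s : Finset ι) {f : ι → R[X]} {u : ι → ℕ}
    (hf : ∀ i ∈ s, (f i).natDegree ≤ u i) :
    (∏ i ∈ s, f i).coeff (∑ i ∈ s, u i) = ∏ i ∈ s, (f i).coeff (u i) := by
  classical
  induction s using Finset.induction_on with
  | empty => simp
  | insert a s ha ih =>
    have hs : ∀ i ∈ s, (f i).natDegree ≤ u i := fun i hi => hf i (mem_insert_of_mem hi)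
    rw [prod_insert ha, sum_insert ha, prod_insert ha, coeff_mul_add_eq_of_natDegree_le
      (hf a (mem_insert_self a s)) ((natDegree_prod_le _ _).trans (sum_le_sum hs)), ih hs]

theorem prod_range_X_sub_natCast (j : ℕ) :
    ∏ i ∈ range j, (X - C (i : R)) = descPochhammer R j := by
  induction j with
  | zero => simp
  | succ j ih => rw [prod_range_succ, ih, descPochhammer_succ_right, map_natCast]

theorem monic_sum_smul_descPochhammer [IsDomain R] {c : ℕ → R} (hc : c n = 1) :
    (∑ j ∈ range (n + 1), c j • descPochhammer R j).Monic ∧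
      (∑ j ∈ range (n + 1), c j • descPochhammer R j).natDegree = n := by
  have hlower : (∑ j ∈ range n, c j • descPochhammer R j).degree < (descPochhammer R n).degree := by
    rw [degree_eq_natDegree (monic_descPochhammer R n).ne_zero, descPochhammer_natDegree]
    refine (degree_sum_le _ _).trans_lt
      ((Finset.sup_lt_iff (WithBot.bot_lt_coe n)).mpr fun j hj => ?_)
    refine (degree_smul_le _ _).trans_lt (degree_le_natDegree.trans_lt ?_)
    rw [descPochhammer_natDegree]
    exact WithBot.coe_lt_coe.mpr (mem_range.mp hj)
  rw [sum_range_succ, hc, one_smul]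
  exact ⟨(monic_descPochhammer R n).add_of_right hlower,
    by rw [natDegree_add_eq_right_of_degree_lt hlower, descPochhammer_natDegree]⟩

end Polynomial

namespace Matrix

variable {R : Type*} [CommRing R] {n : Type*} [Fintype n] [DecidableEq n]
  {M : Matrix n n R[X]} {u : n → ℕ}

theorem natDegree_det_le_of_natDegree_le (hM : ∀ i j, (M i j).natDegree ≤ u i) :
    M.det.natDegree ≤ ∑ i, u i := by
  rw [det_apply']
  refine natDegree_sum_le_of_forall_le _ _ fun σ _ => natDegree_mul_le.trans ?_
  rw [natDegree_intCast, zero_add, ← Equiv.sum_comp σ u]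
  exact (natDegree_prod_le _ _).trans (sum_le_sum fun i _ => hM (σ i) i)

theorem coeff_det_of_natDegree_le (hM : ∀ i j, (M i j).natDegree ≤ u i) :
    M.det.coeff (∑ i, u i) = (of fun i j => (M i j).coeff (u i)).det := by
  rw [det_apply', det_apply', finsetSum_coeff]
  refine sum_congr rfl fun σ _ => ?_
  rw [← C_eq_intCast, coeff_C_mul, ← Equiv.sum_comp σ u,
    coeff_prod_sum_of_natDegree_le _ fun i _ => hM (σ i) i]
  rfl

theorem det_descFactorial_ne_zero [IsDomain R] [CharZero R] {k : ℕ} {d : Fin k → ℕ}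
    (hd : Function.Injective d) : (of fun i t : Fin k => ((d i).descFactorial t : R)).det ≠ 0 := by
  have hvdm := det_eval_matrixOfPolynomials_eq_det_vandermonde (fun i => (d i : R))
    (fun t => descPochhammer R t) (fun t => descPochhammer_natDegree R t)
    (fun t => monic_descPochhammer R t)
  simp only [descPochhammer_eval_eq_descFactorial] at hvdm
  rw [← hvdm, det_vandermonde_ne_zero_iff]
  exact Nat.cast_injective.comp hd

theorem det_of_choose (k : ℕ) : (of fun t j : Fin k => ((j : ℕ).choose t : R)).det = 1 := by
  rw [det_of_isUpperTriangular fun t j hjt => by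
    rw [of_apply, Nat.choose_eq_zero_of_lt (show (j : ℕ) < t from hjt), Nat.cast_zero]]
  simp

end Matrix

namespace Polynomial

variable {R : Type*} [CommRing R] {k : ℕ}

noncomputable def casoratianMatrix (p : Fin k → R[X]) : Matrix (Fin k) (Fin k) R[X] :=
  Matrix.of fun i j => (p i).comp (X - C ((j : ℕ) : R))

theorem casoratianMatrix_eq_mul (p : Fin k → R[X]) :
    casoratianMatrix p = (Matrix.of fun i t : Fin k => (fwdDifference (-1))^[t] (p i)) *
      Matrix.of fun t j : Fin k => ((j : ℕ).choose t : R[X]) := by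
  ext i j
  have hshift : (p i).comp (X - C ((j : ℕ) : R)) = taylor ((j : ℕ) • (-1 : R)) (p i) := by
    rw [taylor_apply, nsmul_eq_mul, mul_neg_one, map_neg, ← sub_eq_add_neg]
  have hchoose : ∀ t ∈ range k, t ∉ range (j + 1) →
      (j : ℕ).choose t • (fwdDifference (-1))^[t] (p i) = 0 := fun t _ ht => by
    rw [Nat.choose_eq_zero_of_lt (by simpa using ht), zero_smul]
  rw [casoratianMatrix, Matrix.of_apply, hshift, taylor_nsmul_eq_sum_fwdDifference_iter,
    sum_subset (range_subset_range.mpr j.isLt) hchoose, Matrix.mul_apply,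
    ← Fin.sum_univ_eq_sum_range (fun t => (j : ℕ).choose t • (fwdDifference (-1))^[t] (p i))]
  simp only [Matrix.of_apply, nsmul_eq_mul, mul_comm]

theorem det_casoratianMatrix_mul_X_pow (p : Fin k → R[X]) :
    (casoratianMatrix p).det * X ^ k.choose 2 =
      (Matrix.of fun i t : Fin k => (fwdDifference (-1))^[t] (p i) * X ^ (t : ℕ)).det := by
  have hsum : ∑ t : Fin k, (t : ℕ) = k.choose 2 := by
    rw [Fin.sum_univ_eq_sum_range (fun t => t) k, sum_range_id, Nat.choose_two_right]
  have hscale : (Matrix.of fun i t : Fin k => (fwdDifference (-1))^[t] (p i) * X ^ (t : ℕ)) =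
      (Matrix.of fun i t : Fin k => (fwdDifference (-1))^[t] (p i)) *
        Matrix.diagonal fun t : Fin k => X ^ (t : ℕ) := by
    ext i t
    simp [Matrix.mul_diagonal]
  rw [hscale, Matrix.det_mul, Matrix.det_diagonal, prod_pow_eq_pow_sum, hsum,
    casoratianMatrix_eq_mul, Matrix.det_mul, Matrix.det_of_choose, mul_one]

theorem det_casoratianMatrix_ne_zero_and_natDegree [IsDomain R] [CharZero R] {p : Fin k → R[X]}
    (hp : ∀ i, p i ≠ 0) (hdeg : Function.Injective fun i => (p i).natDegree) :
    (casoratianMatrix p).det ≠ 0 ∧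
      (casoratianMatrix p).det.natDegree + k.choose 2 = ∑ i, (p i).natDegree := by
  set S := Matrix.of fun i t : Fin k => (fwdDifference (-1 : R))^[t] (p i) * X ^ (t : ℕ)
  have hrow (i t : Fin k) : (S i t).natDegree ≤ (p i).natDegree :=
    natDegree_fwdDifference_iter_mul_X_pow_le le_rfl t
  have hcoeff : S.det.coeff (∑ i, (p i).natDegree) ≠ 0 := by
    rw [Matrix.coeff_det_of_natDegree_le hrow]
    have hleading : (Matrix.of fun i t : Fin k => (S i t).coeff (p i).natDegree) =
        Matrix.diagonal (fun i => (p i).leadingCoeff) *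
          (Matrix.of fun i t : Fin k => ((p i).natDegree.descFactorial t : R)) *
            Matrix.diagonal fun t : Fin k => (-1) ^ (t : ℕ) := by
      ext i t
      simp only [S, Matrix.of_apply, coeff_fwdDifference_iter_mul_X_pow le_rfl, leadingCoeff,
        Matrix.mul_diagonal, Matrix.diagonal_mul]
      ring
    rw [hleading, Matrix.det_mul, Matrix.det_mul, Matrix.det_diagonal, Matrix.det_diagonal]
    exact mul_ne_zero (mul_ne_zero (prod_ne_zero_iff.mpr fun i _ => leadingCoeff_ne_zero.mpr (hp i))
      (Matrix.det_descFactorial_ne_zero hdeg))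
        (prod_ne_zero_iff.mpr fun t _ => pow_ne_zero _ (neg_ne_zero.mpr one_ne_zero))
  have hS : S.det ≠ 0 := fun h => hcoeff (by rw [h, coeff_zero])
  have hSdeg : S.det.natDegree = ∑ i, (p i).natDegree :=
    (Matrix.natDegree_det_le_of_natDegree_le hrow).antisymm (le_natDegree_of_ne_zero hcoeff)
  rw [← det_casoratianMatrix_mul_X_pow] at hS hSdeg
  have hdet := left_ne_zero_of_mul hS
  exact ⟨hdet, by rwa [natDegree_mul_X_pow _ hdet] at hSdeg⟩

end Polynomial

theorem charlierP_eq_smul_sum_descPochhammer (a : ℝ) (n : ℕ) :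
    charlierP a n = (n.factorial : ℝ)⁻¹ •
      ∑ j ∈ range (n + 1), ((-a) ^ (n - j) * (n.choose j : ℝ)) • descPochhammer ℝ j := by
  simp only [charlierP, prod_range_X_sub_natCast]

theorem natDegree_charlierP (a : ℝ) (n : ℕ) : (charlierP a n).natDegree = n := by
  rw [charlierP_eq_smul_sum_descPochhammer, natDegree_smul _ (by positivity)]
  exact (monic_sum_smul_descPochhammer (by simp)).2

theorem charlierP_ne_zero (a : ℝ) (n : ℕ) : charlierP a n ≠ 0 := by
  rw [charlierP_eq_smul_sum_descPochhammer]
  exact smul_ne_zero (by positivity) (monic_sum_smul_descPochhammer (by simp)).1.ne_zero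

theorem casoratianC_degree_general (a : ℝ) (F : Finset ℕ) :
    ((casoratianC a F).natDegree : ℤ)
        = (∑ f ∈ F, (f : ℤ)) - (F.card.choose 2 : ℤ) ∧ casoratianC a F ≠ 0 := by
  set e := F.orderIsoOfFin rfl
  have hsum : ∑ i, (charlierP a (e i)).natDegree = ∑ f ∈ F, f := by
    simp only [natDegree_charlierP]
    rw [← sum_coe_sort F]
    exact e.toEquiv.sum_comp (fun f : F => (f : ℕ))
  obtain ⟨hne, hdeg⟩ : casoratianC a F ≠ 0 ∧
      (casoratianC a F).natDegree + F.card.choose 2 = ∑ i, (charlierP a (e i)).natDegree :=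
    det_casoratianMatrix_ne_zero_and_natDegree (fun i => charlierP_ne_zero a (e i)) fun i j hij =>
      e.injective (Subtype.ext (by simpa only [natDegree_charlierP] using hij))
  rw [hsum] at hdeg
  refine ⟨?_, hne⟩
  have hdegℤ := congrArg (Nat.cast : ℕ → ℤ) hdeg
  push_cast at hdegℤ
  linarith

theorem casoratianC_degree (a : ℝ) (ha : a ≠ 0) (F : Finset ℕ) (hFne : F.Nonempty)
    (hFpos : ∀ f ∈ F, 0 < f) :
    ((casoratianC a F).natDegree : ℤ)
        = (∑ f ∈ F, (f : ℤ)) - (F.card.choose 2 : ℤ) ∧ casoratianC a F ≠ 0 :=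
  casoratianC_degree_general a F
end

section
/- For every n ≥ 0, the limit lim_{a→∞} (2/a)^{n/2} c_n^a(√(2a)·x + a) = H_n(x)/n! holds uniformly on compact subsets of ℝ, where H_n is the Hermite polynomial of degree n. -/
/-!
Both sides satisfy three-term recurrences. The lowering identity
`(n + 1) c_{n+1}(x) = x c_n(x - 1) - a c_n(x)` and the difference identity
`c_{n+1}(x) - c_{n+1}(x - 1) = c_n(x - 1)` give
`(n + 2) c_{n+2}(x) = (x - n - 1 - a) c_{n+1}(x) - a c_n(x)`, which after the substitution
`x ↦ √(2a) x + a` and the scaling by `(2/a)^{n/2}` becomes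
`(n + 2) g_{n+2} = (2x - (n + 1) √(2/a)) g_{n+1} - 2 g_n`.
This is a perturbation, vanishing as `a → ∞`, of the recurrence
`(n + 2) h_{n+2} = 2x h_{n+1} - 2 h_n` of `h_n = H_n / n!`, so uniform convergence on compacts
propagates from `n, n + 1` to `n + 2`; the cases `n = 0, 1` are exact identities.
-/

/-- The Charlier polynomial `c_n^a(x)`. -/
noncomputable def charlierFn (a : ℝ) (n : ℕ) (x : ℝ) : ℝ :=
  (n.factorial : ℝ)⁻¹ *
    ∑ j ∈ Finset.range (n + 1),
      (-a) ^ (n - j) * (n.choose j : ℝ) * ∏ i ∈ Finset.range j, (x - (i : ℝ))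

/-- The Hermite polynomial `H_n(x) = n! ∑_{j=0}^{⌊n/2⌋} (-1)^j (2x)^{n-2j}/(j!(n-2j)!)`. -/
noncomputable def hermiteFn (n : ℕ) (x : ℝ) : ℝ :=
  (n.factorial : ℝ) *
    ∑ j ∈ Finset.range (n / 2 + 1),
      (-1 : ℝ) ^ j * (2 * x) ^ (n - 2 * j) / ((j.factorial : ℝ) * ((n - 2 * j).factorial : ℝ))

open Filter Finset Topology

section EvenConvolution

variable {R : Type*} [CommSemiring R]

-- the coefficient of `t ^ n` in `(∑ u j * t ^ (2 * j)) * (∑ v i * t ^ i)`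
def evenConv (u v : ℕ → R) (n : ℕ) : R :=
  ∑ j ∈ range (n / 2 + 1), u j * v (n - 2 * j)

theorem evenConv_add_two (u v : ℕ → R) (α β : R)
    (hu : ∀ j : ℕ, (j + 1 : R) * u (j + 1) = α * u j)
    (hv : ∀ i : ℕ, (i + 1 : R) * v (i + 1) = β * v i) (n : ℕ) :
    (n + 2 : R) * evenConv u v (n + 2) = β * evenConv u v (n + 1) + 2 * α * evenConv u v n := by
  set w : ℕ → R := fun j => ((n + 2 - 2 * j : ℕ) : R) * (u j * v (n + 2 - 2 * j)) with hw
  have hsplit : (n + 2 : R) * evenConv u v (n + 2) =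
      ∑ j ∈ range ((n + 2) / 2 + 1), w j +
        ∑ j ∈ range ((n + 2) / 2 + 1), 2 * ((j : R) * u j) * v (n + 2 - 2 * j) := by
    rw [evenConv, mul_sum, ← sum_add_distrib]
    refine sum_congr rfl fun j hj => ?_
    have h2j : 2 * j ≤ n + 2 := by have := mem_range.1 hj; omega
    have hcast : ((n + 2 - 2 * j : ℕ) : R) + 2 * j = n + 2 := by
      simpa using congrArg (Nat.cast : ℕ → R) (Nat.sub_add_cancel h2j)
    rw [hw, ← hcast]
    ring
  have hrange :
      ∑ j ∈ range ((n + 2) / 2 + 1), w j = ∑ j ∈ range ((n + 1) / 2 + 1), w j := by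
    rcases Nat.even_or_odd n with ⟨m, rfl⟩ | ⟨m, rfl⟩
    · have hlast : w ((m + m + 1) / 2 + 1) = 0 := by
        simp only [hw]
        rw [show m + m + 2 - 2 * ((m + m + 1) / 2 + 1) = 0 by omega, Nat.cast_zero, zero_mul]
      rw [show (m + m + 2) / 2 + 1 = (m + m + 1) / 2 + 1 + 1 by omega, sum_range_succ, hlast,
        add_zero]
    · rw [show (2 * m + 1 + 2) / 2 = (2 * m + 1 + 1) / 2 by omega]
  have hfirst : ∑ j ∈ range ((n + 1) / 2 + 1), w j = β * evenConv u v (n + 1) := by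
    rw [evenConv, mul_sum]
    refine sum_congr rfl fun j hj => ?_
    simp only [hw]
    rw [show n + 2 - 2 * j = n + 1 - 2 * j + 1 by have := mem_range.1 hj; omega]
    generalize n + 1 - 2 * j = k
    push_cast
    rw [mul_left_comm, hv]
    ring
  have hsecond : ∑ j ∈ range ((n + 2) / 2 + 1), 2 * ((j : R) * u j) * v (n + 2 - 2 * j)
      = 2 * α * evenConv u v n := by
    rw [show (n + 2) / 2 = n / 2 + 1 by omega, sum_range_succ', evenConv, mul_sum]
    simp only [Nat.cast_zero, zero_mul, mul_zero, add_zero]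
    refine sum_congr rfl fun j _ => ?_
    rw [show n + 2 - 2 * (j + 1) = n - 2 * j by omega]
    push_cast
    rw [hu]
    ring
  rw [hsplit, hrange, hfirst, hsecond]

end EvenConvolution

theorem hermiteFn_div_factorial_eq_evenConv (n : ℕ) (x : ℝ) :
    hermiteFn n x / n.factorial =
      evenConv (fun j => (-1 : ℝ) ^ j / j.factorial) (fun i => (2 * x) ^ i / i.factorial) n := by
  rw [hermiteFn, mul_div_cancel_left₀ _ (by positivity), evenConv]
  refine sum_congr rfl fun j _ => ?_
  rw [div_mul_div_comm]

theorem hermiteFn_div_factorial_add_two (n : ℕ) (x : ℝ) :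
    (n + 2 : ℝ) * (hermiteFn (n + 2) x / (n + 2).factorial) =
      2 * x * (hermiteFn (n + 1) x / (n + 1).factorial) - 2 * (hermiteFn n x / n.factorial) := by
  simp only [hermiteFn_div_factorial_eq_evenConv]
  rw [evenConv_add_two _ _ (-1) (2 * x) _ _ n]
  · ring
  · intro j
    rw [Nat.factorial_succ, pow_succ]
    push_cast
    field_simp
  · intro i
    rw [Nat.factorial_succ, pow_succ]
    push_cast
    field_simp

noncomputable def charlierSum (a : ℝ) (n : ℕ) (x : ℝ) : ℝ :=
  ∑ j ∈ range (n + 1), (-a) ^ (n - j) * (n.choose j : ℝ) * ∏ i ∈ range j, (x - i)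

theorem prod_range_succ_sub_natCast (x : ℝ) (j : ℕ) :
    ∏ i ∈ range (j + 1), (x - i) = x * ∏ i ∈ range j, (x - 1 - i) := by
  rw [prod_range_succ', mul_comm]
  push_cast
  simp only [sub_zero, sub_add_eq_sub_sub]
  ring_nf

theorem prod_range_succ_sub_natCast_sub (x : ℝ) (j : ℕ) :
    ∏ i ∈ range (j + 1), (x - i) - ∏ i ∈ range (j + 1), (x - 1 - i) =
      (j + 1) * ∏ i ∈ range j, (x - 1 - i) := by
  rw [prod_range_succ_sub_natCast, prod_range_succ]
  ring

theorem charlierSum_succ (a : ℝ) (n : ℕ) (x : ℝ) :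
    charlierSum a (n + 1) x = x * charlierSum a n (x - 1) - a * charlierSum a n x := by
  have h := sum_choose_succ_mul (fun i k => (-a) ^ k * ∏ l ∈ range i, (x - l)) n
  simp only [charlierSum, mul_sum]
  rw [sub_eq_neg_add, ← sum_neg_distrib]
  convert h using 1
  · exact sum_congr rfl fun j _ => by ring
  · congr 1 <;> refine sum_congr rfl fun i hi => ?_
    · rw [Nat.sub_add_comm (Nat.lt_succ_iff.1 (mem_range.1 hi)), pow_succ]
      ring
    · rw [prod_range_succ_sub_natCast]
      ring

theorem charlierSum_sub_charlierSum_sub_one (a : ℝ) (n : ℕ) (x : ℝ) :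
    charlierSum a (n + 1) x - charlierSum a (n + 1) (x - 1) =
      (n + 1) * charlierSum a n (x - 1) := by
  rw [charlierSum, charlierSum, ← sum_sub_distrib, sum_range_succ', charlierSum, mul_sum]
  simp only [prod_range_zero, sub_self, add_zero, ← mul_sub,
    prod_range_succ_sub_natCast_sub]
  refine sum_congr rfl fun j _ => ?_
  have hchoose : ((n + 1).choose (j + 1) : ℝ) * (j + 1) = (n + 1) * n.choose j := by
    exact_mod_cast (Nat.add_one_mul_choose_eq n j).symm
  rw [Nat.add_sub_add_right]
  linear_combination (-a) ^ (n - j) * (∏ i ∈ range j, (x - 1 - i)) * hchoose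

theorem charlierFn_eq_inv_factorial_mul (a : ℝ) (n : ℕ) (x : ℝ) :
    charlierFn a n x = (n.factorial : ℝ)⁻¹ * charlierSum a n x := rfl

theorem succ_mul_charlierFn_succ (a : ℝ) (n : ℕ) (x : ℝ) :
    (n + 1 : ℝ) * charlierFn a (n + 1) x = x * charlierFn a n (x - 1) - a * charlierFn a n x := by
  simp only [charlierFn_eq_inv_factorial_mul, charlierSum_succ, Nat.factorial_succ]
  push_cast
  field_simp

theorem charlierFn_succ_sub_charlierFn_succ_sub_one (a : ℝ) (n : ℕ) (x : ℝ) :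
    charlierFn a (n + 1) x - charlierFn a (n + 1) (x - 1) = charlierFn a n (x - 1) := by
  simp only [charlierFn_eq_inv_factorial_mul, ← mul_sub, charlierSum_sub_charlierSum_sub_one,
    Nat.factorial_succ]
  push_cast
  field_simp

theorem charlierFn_add_two (a : ℝ) (n : ℕ) (x : ℝ) :
    (n + 2 : ℝ) * charlierFn a (n + 2) x =
      (x - (n + 1) - a) * charlierFn a (n + 1) x - a * charlierFn a n x := by
  have hlower := succ_mul_charlierFn_succ a (n + 1) x
  have hdiff := charlierFn_succ_sub_charlierFn_succ_sub_one a n x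
  have hlower' := succ_mul_charlierFn_succ a n x
  push_cast at hlower
  linear_combination hlower - x * hdiff + hlower'

theorem charlierFn_one (a x : ℝ) : charlierFn a 1 x = x - a := by
  simp [charlierFn, sum_range_succ, sub_eq_neg_add]

noncomputable def scaledCharlier (n : ℕ) (a x : ℝ) : ℝ :=
  (2 / a) ^ ((n : ℝ) / 2) * charlierFn a n (Real.sqrt (2 * a) * x + a)

theorem scaledCharlier_eq_sqrt_pow_mul {a : ℝ} (ha : 0 ≤ a) (n : ℕ) (x : ℝ) :
    scaledCharlier n a x = Real.sqrt (2 / a) ^ n * charlierFn a n (Real.sqrt (2 * a) * x + a) := by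
  rw [scaledCharlier, Real.rpow_div_two_eq_sqrt _ (by positivity), Real.rpow_natCast]

theorem sqrt_two_mul_mul_sqrt_two_div {a : ℝ} (ha : 0 < a) :
    Real.sqrt (2 * a) * Real.sqrt (2 / a) = 2 := by
  rw [← Real.sqrt_mul (by positivity), show 2 * a * (2 / a) = 2 ^ 2 by field_simp,
    Real.sqrt_sq zero_le_two]

theorem scaledCharlier_one {a : ℝ} (ha : 0 < a) (x : ℝ) : scaledCharlier 1 a x = 2 * x := by
  rw [scaledCharlier_eq_sqrt_pow_mul ha.le, charlierFn_one]
  linear_combination x * sqrt_two_mul_mul_sqrt_two_div ha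

theorem scaledCharlier_add_two {a : ℝ} (ha : 0 < a) (n : ℕ) (x : ℝ) :
    (n + 2 : ℝ) * scaledCharlier (n + 2) a x =
      (2 * x - (n + 1) * Real.sqrt (2 / a)) * scaledCharlier (n + 1) a x -
        2 * scaledCharlier n a x := by
  simp only [scaledCharlier_eq_sqrt_pow_mul ha.le]
  set s := Real.sqrt (2 / a)
  have hsqrt : Real.sqrt (2 * a) * s = 2 := sqrt_two_mul_mul_sqrt_two_div ha
  have hsq : a * s ^ 2 = 2 := by
    rw [Real.sq_sqrt (by positivity)]
    field_simp
  have hrec := charlierFn_add_two a n (Real.sqrt (2 * a) * x + a)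
  linear_combination s ^ (n + 2) * hrec
    + (x * s ^ (n + 1) * charlierFn a (n + 1) (Real.sqrt (2 * a) * x + a)) * hsqrt
    - (s ^ n * charlierFn a n (Real.sqrt (2 * a) * x + a)) * hsq

theorem tendstoUniformlyOn_iff_tendsto_sub {ι α E : Type*} [UniformSpace E] [AddGroup E]
    [IsRightUniformAddGroup E] {F : ι → α → E} {f : α → E} {l : Filter ι} {s : Set α} :
    TendstoUniformlyOn F f l s ↔
      Tendsto (fun q : ι × α => F q.1 q.2 - f q.2) (l ×ˢ 𝓟 s) (𝓝 0) := by
  rw [tendstoUniformlyOn_iff_tendsto, uniformity_eq_comap_nhds_zero, tendsto_comap_iff]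
  rfl

theorem IsCompact.isBoundedUnder_prod_principal {ι α E : Type*} [TopologicalSpace α]
    [SeminormedAddGroup E] {K : Set α} (hK : IsCompact K) {h : α → E} (hh : ContinuousOn h K)
    (l : Filter ι) : IsBoundedUnder (· ≤ ·) (l ×ˢ 𝓟 K) (fun q => ‖h q.2‖) := by
  obtain ⟨C, hC⟩ := hK.exists_bound_of_continuousOn hh
  exact isBoundedUnder_of_eventually_le ((eventually_principal.2 hC).prod_inr l)

theorem tendsto_sqrt_two_div_atTop : Tendsto (fun a : ℝ => Real.sqrt (2 / a)) atTop (𝓝 0) := by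
  have h := (Real.continuous_sqrt.tendsto 0).comp
    ((tendsto_const_nhds (x := (2 : ℝ))).div_atTop tendsto_id)
  rwa [Real.sqrt_zero] at h

theorem continuous_hermiteFn_div_factorial (n : ℕ) :
    Continuous fun x => hermiteFn n x / n.factorial := by
  unfold hermiteFn
  fun_prop

theorem tendstoUniformlyOn_scaledCharlier_add_two {K : Set ℝ} (hK : IsCompact K) {n : ℕ}
    (h₀ : TendstoUniformlyOn (scaledCharlier n) (fun x => hermiteFn n x / n.factorial) atTop K)
    (h₁ : TendstoUniformlyOn (scaledCharlier (n + 1))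
      (fun x => hermiteFn (n + 1) x / (n + 1).factorial) atTop K) :
    TendstoUniformlyOn (scaledCharlier (n + 2))
      (fun x => hermiteFn (n + 2) x / (n + 2).factorial) atTop K := by
  rw [tendstoUniformlyOn_iff_tendsto_sub] at h₀ h₁ ⊢
  set T : ℕ → ℝ → ℝ := fun m x => hermiteFn m x / m.factorial
  set E : ℕ → ℝ × ℝ → ℝ := fun m q => scaledCharlier m q.1 q.2 - T m q.2
  have hs := tendsto_sqrt_two_div_atTop.comp (tendsto_fst (g := 𝓟 K))
  have hx := hK.isBoundedUnder_prod_principal (h := fun x : ℝ => 2 * x) (by fun_prop)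
    (atTop : Filter ℝ)
  have hT := hK.isBoundedUnder_prod_principal
    (continuous_hermiteFn_div_factorial (n + 1)).continuousOn (atTop : Filter ℝ)
  have hrec : ∀ᶠ q in atTop ×ˢ 𝓟 K, (n + 2 : ℝ)⁻¹ * (2 * q.2 * E (n + 1) q -
      (n + 1) * (Real.sqrt (2 / q.1) * E (n + 1) q + Real.sqrt (2 / q.1) * T (n + 1) q.2) -
        2 * E n q) = E (n + 2) q := by
    filter_upwards [(eventually_gt_atTop 0).prod_inl _] with q hq
    have hC := scaledCharlier_add_two hq n q.2
    have hH := hermiteFn_div_factorial_add_two n q.2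
    field_simp
    linear_combination -hC + hH
  have hlim := (((isBoundedUnder_le_mul_tendsto_zero hx h₁).sub
    (((hs.mul h₁).add (hs.zero_mul_isBoundedUnder_le hT)).const_mul (n + 1 : ℝ))).sub
      (h₀.const_mul 2)).const_mul (n + 2 : ℝ)⁻¹
  simpa using hlim.congr' hrec

theorem tendstoUniformlyOn_scaledCharlier {K : Set ℝ} (hK : IsCompact K) (n : ℕ) :
    TendstoUniformlyOn (scaledCharlier n) (fun x => hermiteFn n x / n.factorial) atTop K := by
  induction n using Nat.twoStepInduction with
  | zero =>
    refine tendstoUniformlyOn_iff_tendsto_sub.2 (tendsto_const_nhds.congr fun q => ?_)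
    simp [scaledCharlier, charlierFn, hermiteFn]
  | one =>
    refine tendstoUniformlyOn_iff_tendsto_sub.2 (tendsto_const_nhds.congr' ?_)
    filter_upwards [(eventually_gt_atTop 0).prod_inl _] with q hq
    simp [scaledCharlier_one hq, hermiteFn]
  | more n h₀ h₁ => exact tendstoUniformlyOn_scaledCharlier_add_two hK h₀ h₁

theorem charlier_to_hermite_limit (n : ℕ) (K : Set ℝ) (hK : IsCompact K) :
    TendstoUniformlyOn
      (fun (a : ℝ) (x : ℝ) =>
        (2 / a) ^ ((n : ℝ) / 2) * charlierFn a n (Real.sqrt (2 * a) * x + a))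
      (fun x => hermiteFn n x / (n.factorial : ℝ))
      Filter.atTop K :=
  tendstoUniformlyOn_scaledCharlier hK n
end
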